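/- arXiv:1109.1352 — 2 statements merged into one kernel-verified Lean document; each statement's English description precedes it below -/
import Mathlib

section
/- Let f be an interval exchange transformation of I = [p,q) that is not the identity. Then there exists ε_0 > 0 such that for every 0 < ε < ε_0 there exist interval swap maps g_1, g_2 with the property that g_2 f^{-1} g_1 f g_1 g_2 is an interval swap map of type ε. -/
open scoped TensorProduct

/-- An interval exchange transformation of the half-open interval `[p, q)`:
a bijection of `[p, q)` onto itself, extended by the identity outside,
which is a translation on each piece of a finite partition of `[p, q)`
into half-open intervals. -/
def IsIET (p q : ℝ) (f : ℝ → ℝ) : Prop :=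
  Set.BijOn f (Set.Ico p q) (Set.Ico p q) ∧
  (∀ x, x ∉ Set.Ico p q → f x = x) ∧
  ∃ (n : ℕ) (pt : Fin (n + 1) → ℝ),
    StrictMono pt ∧ pt 0 = p ∧ pt (Fin.last n) = q ∧
    ∀ i : Fin n, ∃ t : ℝ,
      ∀ x ∈ Set.Ico (pt i.castSucc) (pt i.succ), f x = x + t

/-- A restricted rotation of type `(a, b)` on `[p, q)`: it exchanges two
adjacent half-open intervals of lengths `a` (on the left) and `b` (on the
right) by translation, fixing the rest of the line. -/
def IsRestrictedRotation (p q a b : ℝ) (f : ℝ → ℝ) : Prop :=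
  0 < a ∧ 0 < b ∧ ∃ x : ℝ, p ≤ x ∧ x + a + b ≤ q ∧
    (∀ y ∈ Set.Ico x (x + a), f y = y + b) ∧
    (∀ y ∈ Set.Ico (x + a) (x + a + b), f y = y - a) ∧
    (∀ y, y ∉ Set.Ico x (x + a + b) → f y = y)

/-- An interval swap map of type `a` on `[p, q)`: it interchanges two
disjoint half-open intervals of length `a` by translation, fixing the
rest of the line. -/
def IsIntervalSwap (p q a : ℝ) (f : ℝ → ℝ) : Prop :=
  0 < a ∧ ∃ x y : ℝ, p ≤ x ∧ x + a ≤ y ∧ y + a ≤ q ∧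
    (∀ z ∈ Set.Ico x (x + a), f z = z + (y - x)) ∧
    (∀ z ∈ Set.Ico y (y + a), f z = z - (y - x)) ∧
    (∀ z, z ∉ Set.Ico x (x + a) ∪ Set.Ico y (y + a) → f z = z)

/-- `f` is a finite product (composition) of interval swap maps on `[p, q)`. -/
def IsSwapProduct (p q : ℝ) (f : ℝ → ℝ) : Prop :=
  ∃ L : List (ℝ → ℝ), (∀ g ∈ L, ∃ a, IsIntervalSwap p q a g) ∧
    f = L.foldr (· ∘ ·) id

/-- `ξ ∈ ℝ ⊗[ℚ] ℝ` is the SAF sum of `f` computed from some partition of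
`[p, q)` into half-open intervals on each of which `f` is a translation. -/
def HasSAF (p q : ℝ) (f : ℝ → ℝ) (ξ : ℝ ⊗[ℚ] ℝ) : Prop :=
  ∃ (n : ℕ) (pt : Fin (n + 1) → ℝ) (t : Fin n → ℝ),
    StrictMono pt ∧ pt 0 = p ∧ pt (Fin.last n) = q ∧
    (∀ i : Fin n, ∀ x ∈ Set.Ico (pt i.castSucc) (pt i.succ), f x = x + t i) ∧
    ξ = ∑ i : Fin n, (pt i.succ - pt i.castSucc) ⊗ₜ[ℚ] t i

/-!
Pick a piece `[u, u + δ)` on which `f` translates by `τ ≠ 0`, and let `g₁` swap the two halves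
of `[u + τ, u + τ + 2c)`. Then `f⁻¹ g₁ f` swaps the two halves of `[u, u + 2c)`, a block disjoint
from the first once `2c < |τ|`, so `f⁻¹ g₁ f g₁` swaps the halves of two disjoint blocks of length
`2c`. Conjugating by the swap `g₂` of the left half of the left block with the right half of the
right block turns this into the swap of the two blocks, of type `ε = 2c`; so `ε₀ = min δ |τ|`.
-/

open Set Function

theorem min_add_le_max_of_le_abs {u τ d : ℝ} (h : d ≤ |τ|) :
    min u (u + τ) + d ≤ max u (u + τ) := by
  linarith [max_sub_min_eq_abs u (u + τ), show |u + τ - u| = |τ| by rw [add_sub_cancel_left]]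

noncomputable def swapFun (x y a z : ℝ) : ℝ :=
  if z ∈ Ico x (x + a) then z + (y - x)
  else if z ∈ Ico y (y + a) then z - (y - x) else z

section swapFun

variable {x y a z : ℝ}

theorem swapFun_of_mem_left (h : z ∈ Ico x (x + a)) : swapFun x y a z = z + (y - x) :=
  if_pos h

theorem swapFun_of_mem_right (hxy : x + a ≤ y) (h : z ∈ Ico y (y + a)) :
    swapFun x y a z = z - (y - x) := by
  rw [swapFun, if_neg fun h' => (h'.2.trans_le hxy).not_ge h.1, if_pos h]

theorem swapFun_of_notMem (hx : z ∉ Ico x (x + a)) (hy : z ∉ Ico y (y + a)) :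
    swapFun x y a z = z := by
  rw [swapFun, if_neg hx, if_neg hy]

theorem isIntervalSwap_swapFun {p q : ℝ} (ha : 0 < a) (hpx : p ≤ x) (hxy : x + a ≤ y)
    (hyq : y + a ≤ q) : IsIntervalSwap p q a (swapFun x y a) :=
  ⟨ha, x, y, hpx, hxy, hyq, fun _ hz => swapFun_of_mem_left hz,
    fun _ hz => swapFun_of_mem_right hxy hz,
    fun _ hz => swapFun_of_notMem (fun h => hz (Or.inl h)) (fun h => hz (Or.inr h))⟩

theorem invFun_comp_swapFun_comp {f : ℝ → ℝ} (hf : Injective f) {τ : ℝ} (hxy : x + a ≤ y)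
    (hx : ∀ z ∈ Ico x (x + a), f z = z + τ) (hy : ∀ z ∈ Ico y (y + a), f z = z + τ) :
    invFun f ∘ swapFun (x + τ) (y + τ) a ∘ f = swapFun x y a := by
  have hpre : ∀ {b z}, (∀ w ∈ Ico b (b + a), f w = w + τ) →
      f z ∈ Ico (b + τ) (b + τ + a) → z ∈ Ico b (b + a) := by
    intro b z hb hfz
    have hw : f z - τ ∈ Ico b (b + a) := ⟨by linarith [hfz.1], by linarith [hfz.2]⟩
    have hfw : f (f z - τ) = f z := by rw [hb _ hw]; ring
    rwa [← hf hfw]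
  funext z
  simp only [comp_apply]
  by_cases hzx : z ∈ Ico x (x + a)
  · have hz' : z + (y - x) ∈ Ico y (y + a) := ⟨by linarith [hzx.1], by linarith [hzx.2]⟩
    rw [hx z hzx, swapFun_of_mem_left ⟨by linarith [hzx.1], by linarith [hzx.2]⟩,
      show z + τ + (y + τ - (x + τ)) = z + (y - x) + τ by ring, ← hy _ hz',
      leftInverse_invFun hf, swapFun_of_mem_left hzx]
  by_cases hzy : z ∈ Ico y (y + a)
  · have hz' : z - (y - x) ∈ Ico x (x + a) := ⟨by linarith [hzy.1], by linarith [hzy.2]⟩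
    rw [hy z hzy, swapFun_of_mem_right (by linarith) ⟨by linarith [hzy.1], by linarith [hzy.2]⟩,
      show z + τ - (y + τ - (x + τ)) = z - (y - x) + τ by ring, ← hx _ hz',
      leftInverse_invFun hf, swapFun_of_mem_right hxy hzy]
  · rw [swapFun_of_notMem (fun h => hzx (hpre hx h)) (fun h => hzy (hpre hy h)),
      leftInverse_invFun hf, swapFun_of_notMem hzx hzy]

theorem swapFun_comm_of_adjacent {L R c : ℝ} (hLR : L + 2 * c ≤ R) :
    swapFun L (L + c) c ∘ swapFun R (R + c) c = swapFun R (R + c) c ∘ swapFun L (L + c) c := by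
  funext z
  simp only [comp_apply]
  unfold swapFun
  split_ifs <;> simp only [mem_Ico] at * <;> grind

theorem swapFun_conj_adjacent {L R c : ℝ} (hLR : L + 2 * c ≤ R) :
    swapFun L (R + c) c ∘ swapFun L (L + c) c ∘ swapFun R (R + c) c ∘ swapFun L (R + c) c
      = swapFun L R (2 * c) := by
  funext z
  simp only [comp_apply]
  -- naming the intermediate values keeps `unfold` from nesting the `if`s four deep
  generalize h₁ : swapFun L (R + c) c z = w₁
  generalize h₂ : swapFun R (R + c) c w₁ = w₂
  generalize h₃ : swapFun L (L + c) c w₂ = w₃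
  unfold swapFun at *
  simp only [mem_Ico] at *
  split_ifs at * <;> grind

theorem swapFun_conj_invFun_comp_swapFun_comp {f : ℝ → ℝ} (hf : Injective f) {u τ c : ℝ}
    (hcτ : 2 * c ≤ |τ|) (htrans : ∀ z ∈ Ico u (u + 2 * c), f z = z + τ) :
    swapFun (min u (u + τ)) (max u (u + τ) + c) c ∘ invFun f ∘
        swapFun (u + τ) (u + τ + c) c ∘ f ∘ swapFun (u + τ) (u + τ + c) c ∘
        swapFun (min u (u + τ)) (max u (u + τ) + c) c =
      swapFun (min u (u + τ)) (max u (u + τ)) (2 * c) := by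
  have hconj : invFun f ∘ swapFun (u + τ) (u + τ + c) c ∘ f = swapFun u (u + c) c := by
    rw [show u + τ + c = u + c + τ by ring]
    exact invFun_comp_swapFun_comp hf le_rfl
      (fun z hz => htrans z ⟨hz.1, by linarith [hz.1, hz.2]⟩)
      (fun z hz => htrans z ⟨by linarith [hz.1, hz.2], by linarith [hz.2]⟩)
  have hpair : swapFun u (u + c) c ∘ swapFun (u + τ) (u + τ + c) c =
      swapFun (min u (u + τ)) (min u (u + τ) + c) c ∘
        swapFun (max u (u + τ)) (max u (u + τ) + c) c := by
    rcases le_total 0 τ with hτ | hτ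
    · rw [min_eq_left (by linarith), max_eq_right (by linarith)]
    · rw [abs_of_nonpos hτ] at hcτ
      rw [min_eq_right (by linarith), max_eq_left (by linarith)]
      exact (swapFun_comm_of_adjacent (by linarith)).symm
  calc _ = swapFun (min u (u + τ)) (max u (u + τ) + c) c ∘
        ((invFun f ∘ swapFun (u + τ) (u + τ + c) c ∘ f) ∘ swapFun (u + τ) (u + τ + c) c) ∘
        swapFun (min u (u + τ)) (max u (u + τ) + c) c := rfl
    _ = _ := by rw [hconj, hpair]; exact swapFun_conj_adjacent (min_add_le_max_of_le_abs hcτ)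

end swapFun

theorem exists_mem_Ico_castSucc_succ {α : Type*} [LinearOrder α] :
    ∀ {n : ℕ} (pt : Fin (n + 1) → α) {x : α}, x ∈ Ico (pt 0) (pt (Fin.last n)) →
      ∃ i : Fin n, x ∈ Ico (pt i.castSucc) (pt i.succ)
  | 0, _, _, hx => absurd hx (by simp)
  | n + 1, pt, x, hx => by
    by_cases h : x < pt (Fin.last n).castSucc
    · obtain ⟨i, hi⟩ := exists_mem_Ico_castSucc_succ (pt ∘ Fin.castSucc) ⟨hx.1, h⟩
      exact ⟨i.castSucc, hi⟩
    · exact ⟨Fin.last n, not_lt.1 h, hx.2⟩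

namespace IsIET

variable {p q : ℝ} {f : ℝ → ℝ}

theorem injective (hf : IsIET p q f) : Injective f := by
  obtain ⟨hbij, hid, -⟩ := hf
  have hpw : f = (Ico p q).piecewise f id :=
    funext fun x => by by_cases hx : x ∈ Ico p q <;> simp [hx, hid]
  rw [hpw, injective_piecewise_iff]
  exact ⟨hbij.injOn, injOn_id _,
    fun x hx y hy hxy => hy ((show f x = y from hxy) ▸ hbij.mapsTo hx)⟩

theorem exists_translation_ne_zero (hf : IsIET p q f) (hne : f ≠ id) :
    ∃ u δ τ : ℝ, 0 < δ ∧ τ ≠ 0 ∧ Ico u (u + δ) ⊆ Ico p q ∧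
      ∀ z ∈ Ico u (u + δ), f z = z + τ := by
  obtain ⟨-, hid, n, pt, hmono, hp, hq, hpieces⟩ := hf
  choose t ht using hpieces
  obtain ⟨i, hi⟩ : ∃ i, t i ≠ 0 := by
    by_contra! h
    refine hne (funext fun x => ?_)
    by_cases hx : x ∈ Ico p q
    · obtain ⟨i, hxi⟩ := exists_mem_Ico_castSucc_succ pt (hp ▸ hq ▸ hx)
      simpa [h i] using ht i x hxi
    · exact hid x hx
  refine ⟨pt i.castSucc, pt i.succ - pt i.castSucc, t i,
    sub_pos.2 (hmono Fin.castSucc_lt_succ), hi, ?_, ?_⟩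
  · rw [add_sub_cancel, ← hp, ← hq]
    exact Ico_subset_Ico (hmono.monotone (Fin.zero_le _)) (hmono.monotone (Fin.le_last _))
  · rw [add_sub_cancel]
    exact ht i

end IsIET

/-- For every nontrivial interval exchange transformation `f` there is
`ε₀ > 0` such that for every `0 < ε < ε₀` there exist interval swap maps
`g₁, g₂` with `g₂ ∘ f⁻¹ ∘ g₁ ∘ f ∘ g₁ ∘ g₂` an interval swap map of type `ε`. -/
theorem swap_from_nontrivial_iet (p q : ℝ) (f : ℝ → ℝ)
    (hf : IsIET p q f) (hne : f ≠ id) :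
    ∃ ε₀ > 0, ∀ ε, 0 < ε → ε < ε₀ →
      ∃ g₁ g₂ : ℝ → ℝ,
        (∃ c, IsIntervalSwap p q c g₁) ∧ (∃ c, IsIntervalSwap p q c g₂) ∧
        IsIntervalSwap p q ε (g₂ ∘ Function.invFun f ∘ g₁ ∘ f ∘ g₁ ∘ g₂) := by
  obtain ⟨u, δ, τ, hδ, hτ, hsub, htrans⟩ := hf.exists_translation_ne_zero hne
  refine ⟨min δ |τ|, lt_min hδ (abs_pos.2 hτ), fun ε hε hεlt => ?_⟩
  obtain ⟨c, rfl⟩ : ∃ c, ε = 2 * c := ⟨ε / 2, by ring⟩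
  have hc : 0 < c := by linarith
  have hcδ : 2 * c < δ := hεlt.trans_le (min_le_left _ _)
  have hcτ : 2 * c < |τ| := hεlt.trans_le (min_le_right _ _)
  have hu : u ∈ Ico u (u + δ) := ⟨le_rfl, by linarith⟩
  have hu₂ : u + 2 * c ∈ Ico u (u + δ) := ⟨by linarith, by linarith⟩
  have hfu := htrans u hu ▸ hf.1.mapsTo (hsub hu)
  have hfu₂ := htrans _ hu₂ ▸ hf.1.mapsTo (hsub hu₂)
  have hpL : p ≤ min u (u + τ) := le_min (hsub hu).1 hfu.1
  have hRq : max u (u + τ) + 2 * c ≤ q := by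
    rw [← max_add_add_right]
    exact max_le (by linarith [(hsub hu₂).2]) (by linarith [hfu₂.2])
  refine ⟨swapFun (u + τ) (u + τ + c) c, swapFun (min u (u + τ)) (max u (u + τ) + c) c,
    ⟨c, isIntervalSwap_swapFun hc hfu.1 le_rfl (by linarith [hfu₂.2])⟩,
    ⟨c, isIntervalSwap_swapFun hc hpL (by linarith [min_le_max (a := u) (b := u + τ)])
      (by linarith)⟩, ?_⟩
  rw [swapFun_conj_invFun_comp_swapFun_comp hf.injective hcτ.le
    fun z hz => htrans z ⟨hz.1, by linarith [hz.2]⟩]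
  exact isIntervalSwap_swapFun hε hpL (min_add_le_max_of_le_abs hcτ.le) hRq
end

section
/- The map SAF : 𝒢_I → ℝ ⊗_ℚ ℝ sending an interval exchange transformation f to Σ_i λ_i ⊗ t_i (over any partition of I into half-open intervals of lengths λ_i on which f translates by t_i) is a group homomorphism: SAF(f ∘ g) = SAF(f) + SAF(g). -/
open scoped TensorProduct

/-!
Refine the partition of `g` by the `g`-preimages of the cut points of the partition of `f`.
On each refined piece `J` the map `g` translates by some `w`, and `g '' J` lies in a piece of
`f`, where `f` translates by some `t`; so `f ∘ g` translates by `w + t` on `J`, and its SAF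
sum splits as a sum for `g` over the pieces `J` plus a sum for `f` over the pieces `g '' J`.
Both families partition `[p, q)` (the second because `g` is a bijection of `[p, q)`), and the
SAF sum over any such partition equals `∑ v, |{x ∈ [p, q) | f x - x = v}| ⊗ v`, so it does
not depend on the partition.
-/

open Set MeasureTheory Function

structure IsIcoPartition {α ι : Type*} [LinearOrder α] (I : Set α) (lo hi : ι → α) : Prop where
  le : ∀ i, lo i ≤ hi i
  pairwise_disjoint : Pairwise (Disjoint on fun i => Ico (lo i) (hi i))
  iUnion_eq : ⋃ i, Ico (lo i) (hi i) = I

namespace IsIcoPartition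

section LinearOrder

variable {α ι : Type*} [LinearOrder α] {I : Set α} {lo hi : ι → α}

theorem Ico_subset (h : IsIcoPartition I lo hi) (i : ι) : Ico (lo i) (hi i) ⊆ I :=
  h.iUnion_eq ▸ subset_iUnion (fun i => Ico (lo i) (hi i)) i

theorem exists_mem (h : IsIcoPartition I lo hi) {x : α} (hx : x ∈ I) :
    ∃ i, x ∈ Ico (lo i) (hi i) :=
  mem_iUnion.1 (h.iUnion_eq ▸ hx)

theorem exists_Ico_subset (h : IsIcoPartition I lo hi) {c d : α} (hc : c ∈ I)
    (hgap : ∀ j, hi j ∉ Ioo c d) : ∃ k, Ico c d ⊆ Ico (lo k) (hi k) := by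
  obtain ⟨k, hck⟩ := h.exists_mem hc
  exact ⟨k, Ico_subset_Ico hck.1 (not_lt.1 fun hlt => hgap k ⟨hck.2, hlt⟩)⟩

end LinearOrder

section OrderedGroup

variable {α ι : Type*} [AddCommGroup α] [LinearOrder α] [IsOrderedAddMonoid α]
  {I : Set α} {lo hi w : ι → α} {g : α → α}

theorem image_add (h : IsIcoPartition I lo hi) (hg : BijOn g I I)
    (hw : ∀ i, ∀ x ∈ Ico (lo i) (hi i), g x = x + w i) :
    IsIcoPartition I (fun i => lo i + w i) (fun i => hi i + w i) := by
  have himage : ∀ i, g '' Ico (lo i) (hi i) = Ico (lo i + w i) (hi i + w i) := fun i => by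
    rw [← image_add_const_Ico]
    exact image_congr (hw i)
  refine ⟨fun i => add_le_add_left (h.le i) _, fun i j hij => ?_, ?_⟩
  · simp only [onFun, ← himage, disjoint_iff_inter_eq_empty]
    rw [← hg.injOn.image_inter (h.Ico_subset i) (h.Ico_subset j),
      disjoint_iff_inter_eq_empty.1 (h.pairwise_disjoint hij), image_empty]
  · simp only [← himage, ← image_iUnion, h.iUnion_eq, hg.image_eq]

end OrderedGroup

end IsIcoPartition

theorem Monotone.isIcoPartition {α : Type*} [LinearOrder α] {n : ℕ} {pt : Fin (n + 1) → α}
    (hm : Monotone pt) :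
    IsIcoPartition (Ico (pt 0) (pt (Fin.last n))) (fun i : Fin n => pt i.castSucc)
      (fun i => pt i.succ) := by
  refine ⟨fun i => hm i.castSucc_le_succ, ?_, ?_⟩
  · refine (pairwise_disjoint_on _).2 fun i j hij => ?_
    exact Ico_disjoint_Ico_same.mono_right
      (Ico_subset_Ico_left (hm (Fin.succ_le_castSucc_iff.2 hij)))
  · refine subset_antisymm (iUnion_subset fun i =>
      Ico_subset_Ico (hm (Fin.zero_le _)) (hm (Fin.le_last _))) fun x hx => ?_
    by_contra hnot
    have hle : ∀ i : Fin (n + 1), pt i ≤ x := Fin.induction hx.1 fun i hi =>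
      not_lt.1 fun hlt => hnot (mem_iUnion.2 ⟨i, hi, hlt⟩)
    exact (hle (Fin.last n)).not_gt hx.2

theorem StrictMono.apply_notMem_Ioo_castSucc_succ {α : Type*} [Preorder α] {n : ℕ}
    {r : Fin (n + 1) → α} (hr : StrictMono r) (i : Fin n) (j : Fin (n + 1)) :
    r j ∉ Ioo (r i.castSucc) (r i.succ) := fun hj =>
  (Fin.castSucc_lt_iff_succ_le.1 (hr.lt_iff_lt.1 hj.1)).not_gt (hr.lt_iff_lt.1 hj.2)

theorem Set.Finite.exists_strictMono_fin {α : Type*} [LinearOrder α] {S : Set α} (hS : S.Finite)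
    {p q : α} (hp : p ∈ S) (hq : q ∈ S) (hSpq : S ⊆ Icc p q) :
    ∃ (N : ℕ) (r : Fin (N + 1) → α),
      StrictMono r ∧ r 0 = p ∧ r (Fin.last N) = q ∧ range r = S := by
  set s := hS.toFinset
  have hcard : s.card = s.card - 1 + 1 :=
    (Nat.succ_pred_eq_of_pos (Finset.card_pos.2 ⟨p, hS.mem_toFinset.2 hp⟩)).symm
  set r := s.orderEmbOfFin hcard
  have hrange : range r = S := by rw [Finset.range_orderEmbOfFin, hS.coe_toFinset]
  have hrS : ∀ i, r i ∈ Icc p q := fun i => hSpq (hrange ▸ mem_range_self i)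
  obtain ⟨i, hi⟩ := hrange ▸ hp
  obtain ⟨j, hj⟩ := hrange ▸ hq
  exact ⟨_, r, r.strictMono, le_antisymm (hi ▸ r.monotone (Fin.zero_le i)) (hrS 0).1,
    le_antisymm (hrS _).2 (hj ▸ r.monotone (Fin.le_last j)), hrange⟩

namespace IsIcoPartition

variable {ι : Type*} {I : Set ℝ} {lo hi t : ι → ℝ} {f : ℝ → ℝ}

theorem volume_biUnion_toReal (h : IsIcoPartition I lo hi) (A : Finset ι) :
    (volume (⋃ i ∈ A, Ico (lo i) (hi i))).toReal = ∑ i ∈ A, (hi i - lo i) := by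
  rw [measure_biUnion_finset (fun i _ j _ hij => h.pairwise_disjoint hij)
    (fun _ _ => measurableSet_Ico), ENNReal.toReal_sum (fun _ _ => measure_Ico_lt_top.ne)]
  exact Finset.sum_congr rfl fun i _ => by
    rw [Real.volume_Ico, ENNReal.toReal_ofReal (sub_nonneg.2 (h.le i))]

theorem inter_displacement_eq [Fintype ι] (h : IsIcoPartition I lo hi)
    (hf : ∀ i, ∀ x ∈ Ico (lo i) (hi i), f x = x + t i) (v : ℝ) :
    I ∩ {x | f x - x = v} = ⋃ i ∈ Finset.univ.filter (t · = v), Ico (lo i) (hi i) := by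
  ext x
  simp only [mem_inter_iff, mem_ofPred_eq, mem_iUnion, Finset.mem_filter, Finset.mem_univ,
    true_and, exists_prop]
  constructor
  · rintro ⟨hxI, rfl⟩
    obtain ⟨i, hi⟩ := h.exists_mem hxI
    exact ⟨i, by rw [hf i x hi]; ring, hi⟩
  · rintro ⟨i, rfl, hi⟩
    exact ⟨h.Ico_subset i hi, by rw [hf i x hi]; ring⟩

theorem sum_tmul_eq_sum_volume [Fintype ι] (h : IsIcoPartition I lo hi)
    (hf : ∀ i, ∀ x ∈ Ico (lo i) (hi i), f x = x + t i) {V : Finset ℝ} (hV : ∀ i, t i ∈ V) :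
    ∑ i, (hi i - lo i) ⊗ₜ[ℚ] t i
      = ∑ v ∈ V, (volume (I ∩ {x | f x - x = v})).toReal ⊗ₜ[ℚ] v := by
  rw [← Finset.sum_fiberwise_of_maps_to (g := t) fun i _ => hV i]
  refine Finset.sum_congr rfl fun v _ => ?_
  rw [h.inter_displacement_eq hf, h.volume_biUnion_toReal, TensorProduct.sum_tmul]
  exact Finset.sum_congr rfl fun i hi => by rw [(Finset.mem_filter.1 hi).2]

theorem sum_tmul_eq [Fintype ι] {κ : Type*} [Fintype κ] {lo' hi' t' : κ → ℝ}
    (h : IsIcoPartition I lo hi) (h' : IsIcoPartition I lo' hi')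
    (hf : ∀ i, ∀ x ∈ Ico (lo i) (hi i), f x = x + t i)
    (hf' : ∀ j, ∀ x ∈ Ico (lo' j) (hi' j), f x = x + t' j) :
    ∑ i, (hi i - lo i) ⊗ₜ[ℚ] t i = ∑ j, (hi' j - lo' j) ⊗ₜ[ℚ] t' j := by
  classical
  rw [h.sum_tmul_eq_sum_volume hf (V := Finset.univ.image t ∪ Finset.univ.image t')
      fun i => Finset.mem_union_left _ (Finset.mem_image_of_mem t (Finset.mem_univ i)),
    h'.sum_tmul_eq_sum_volume hf' fun j =>
      Finset.mem_union_right _ (Finset.mem_image_of_mem t' (Finset.mem_univ j))]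

end IsIcoPartition

theorem exists_refinement_translating {p q : ℝ} {g : ℝ → ℝ} (hg : BijOn g (Ico p q) (Ico p q))
    {κ : Type*} [Finite κ] {lo hi : κ → ℝ} (hP : IsIcoPartition (Ico p q) lo hi)
    {m : ℕ} {Q : Fin (m + 1) → ℝ} {s : Fin m → ℝ} (hQm : Monotone Q) (hQ0 : Q 0 = p)
    (hQl : Q (Fin.last m) = q) (hQs : ∀ j, ∀ x ∈ Ico (Q j.castSucc) (Q j.succ), g x = x + s j) :
    ∃ (N : ℕ) (r : Fin (N + 1) → ℝ) (w : Fin N → ℝ) (k : Fin N → κ),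
      StrictMono r ∧ r 0 = p ∧ r (Fin.last N) = q ∧
      (∀ i, ∀ x ∈ Ico (r i.castSucc) (r i.succ), g x = x + w i) ∧
      ∀ i, Ico (r i.castSucc + w i) (r i.succ + w i) ⊆ Ico (lo (k i)) (hi (k i)) := by
  set S := range Q ∪ (Ico p q ∩ g ⁻¹' range hi)
  have hSfin : S.Finite := (finite_range Q).union <|
    ((finite_range hi).subset (image_subset_iff.2 fun _ hx => hx.2)).of_finite_image
      (hg.injOn.mono inter_subset_left)
  have hSpq : S ⊆ Icc p q := union_subset
    (range_subset_iff.2 fun j => ⟨hQ0 ▸ hQm (Fin.zero_le j), hQl ▸ hQm (Fin.le_last j)⟩)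
    (inter_subset_left.trans Ico_subset_Icc_self)
  obtain ⟨N, r, hrm, hr0, hrl, hrS⟩ :=
    hSfin.exists_strictMono_fin (.inl ⟨0, hQ0⟩) (.inl ⟨Fin.last m, hQl⟩) hSpq
  have hr : IsIcoPartition (Ico p q) (fun i : Fin N => r i.castSucc) (fun i => r i.succ) :=
    hr0 ▸ hrl ▸ hrm.monotone.isIcoPartition
  have hgap : ∀ i : Fin N, ∀ x ∈ S, x ∉ Ioo (r i.castSucc) (r i.succ) := by
    rintro i x hx
    obtain ⟨j, rfl⟩ := hrS ▸ hx
    exact hrm.apply_notMem_Ioo_castSucc_succ i j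
  have hleft : ∀ i : Fin N, r i.castSucc ∈ Ico p q := fun i =>
    hr.Ico_subset i (left_mem_Ico.2 (hrm Fin.castSucc_lt_succ))
  have hQ : IsIcoPartition (Ico p q) (fun j : Fin m => Q j.castSucc) (fun j => Q j.succ) :=
    hQ0 ▸ hQl ▸ hQm.isIcoPartition
  choose j hj using fun i => hQ.exists_Ico_subset (hleft i) fun l => hgap i _ (.inl ⟨_, rfl⟩)
  have hgw : ∀ i : Fin N, ∀ x ∈ Ico (r i.castSucc) (r i.succ), g x = x + s (j i) :=
    fun i x hx => hQs _ x (hj i hx)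
  -- a cut point of `hi` strictly inside the image piece would pull back to a point of `S`
  choose k hk using fun i => hP.exists_Ico_subset (d := r i.succ + s (j i))
    (hgw i _ (left_mem_Ico.2 (hrm Fin.castSucc_lt_succ)) ▸ hg.mapsTo (hleft i))
    fun l hl => by
      have hz : hi l - s (j i) ∈ Ioo (r i.castSucc) (r i.succ) :=
        ⟨by linarith [hl.1], by linarith [hl.2]⟩
      refine hgap i _ (.inr ⟨hr.Ico_subset i (Ioo_subset_Ico_self hz), l, ?_⟩) hz
      rw [hgw i _ (Ioo_subset_Ico_self hz), sub_add_cancel]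
  exact ⟨N, r, fun i => s (j i), k, hrm, hr0, hrl, hgw, hk⟩

theorem saf_hom_general (p q : ℝ) (f g : ℝ → ℝ) (hg : IsIET p q g)
    (ξ η : ℝ ⊗[ℚ] ℝ) (hξ : HasSAF p q f ξ) (hη : HasSAF p q g η) :
    HasSAF p q (f ∘ g) (ξ + η) := by
  obtain ⟨n, P, t, hPm, hP0, hPl, hPt, rfl⟩ := hξ
  obtain ⟨m, Q, s, hQm, hQ0, hQl, hQs, rfl⟩ := hη
  have hP : IsIcoPartition (Ico p q) (fun k : Fin n => P k.castSucc) (fun k => P k.succ) :=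
    hP0 ▸ hPl ▸ hPm.monotone.isIcoPartition
  have hQ : IsIcoPartition (Ico p q) (fun j : Fin m => Q j.castSucc) (fun j => Q j.succ) :=
    hQ0 ▸ hQl ▸ hQm.monotone.isIcoPartition
  obtain ⟨N, r, w, k, hrm, hr0, hrl, hgw, hk⟩ :=
    exists_refinement_translating hg.1 hP hQm.monotone hQ0 hQl hQs
  have hr : IsIcoPartition (Ico p q) (fun i : Fin N => r i.castSucc) (fun i => r i.succ) :=
    hr0 ▸ hrl ▸ hrm.monotone.isIcoPartition
  have hfw : ∀ i, ∀ x ∈ Ico (r i.castSucc + w i) (r i.succ + w i), f x = x + t (k i) :=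
    fun i x hx => hPt (k i) x (hk i hx)
  refine ⟨N, r, fun i => w i + t (k i), hrm, hr0, hrl, fun i x hx => ?_, ?_⟩
  · rw [Function.comp_apply, hgw i x hx, hfw i _ ⟨by linarith [hx.1], by linarith [hx.2]⟩]
    ring
  simp only [TensorProduct.tmul_add, Finset.sum_add_distrib]
  rw [add_comm, hr.sum_tmul_eq hQ hgw hQs, ← (hr.image_add hg.1 hgw).sum_tmul_eq hP hfw hPt]
  simp only [add_sub_add_right_eq_sub]

/-- The SAF invariant is a homomorphism: `SAF(f ∘ g) = SAF(f) + SAF(g)`. -/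
theorem saf_hom (p q : ℝ) (f g : ℝ → ℝ) (hf : IsIET p q f) (hg : IsIET p q g)
    (ξ η : ℝ ⊗[ℚ] ℝ) (hξ : HasSAF p q f ξ) (hη : HasSAF p q g η) :
    HasSAF p q (f ∘ g) (ξ + η) :=
  saf_hom_general p q f g hg ξ η hξ hη
end
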